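/- Let M be a von Neumann algebra, let λ be a σ-weakly continuous linear functional on M with polar decomposition λ = ψv (ψ a positive normal functional, v a partial isometry). Then for every a ∈ M one has ‖λa‖ ≤ ψ(v a a* v*)^{1/2} · ‖λ‖^{1/2}, where (λa)(x) := λ(ax). -/

import Mathlib

/-!
The functional `x ↦ ψ (star x * y)` is a positive semidefinite Hermitian form, so the
Cauchy–Schwarz inequality applies to it. Since `λ (a x) = ψ ((a* v*)* x)`, it gives
`|λ (a x)|² ≤ ψ (v a a* v*) · ψ (x* x)`, and `ψ (x* x) ≤ ‖ψ‖ ‖x‖² = ‖λ‖ ‖x‖²` by the C*-identity.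
-/

section PositiveFunctional

variable {M : Type*} [Ring M] [StarRing M] [Algebra ℂ M] [StarModule ℂ M]
  (ψ : M →ₗ[ℂ] ℂ)

lemma conj_apply_star_mul (hreal : ∀ x : M, (ψ (star x * x)).im = 0) (x y : M) :
    (starRingEnd ℂ) (ψ (star x * y)) = ψ (star y * x) := by
  have h₁ := hreal (x + y)
  have h₂ := hreal (x + Complex.I • y)
  simp only [star_add, add_mul, mul_add, map_add, star_smul, smul_mul_assoc, mul_smul_comm,
    map_smul, smul_eq_mul, Complex.add_im, Complex.mul_im, Complex.mul_re, Complex.star_def,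
    Complex.conj_I, Complex.neg_re, Complex.neg_im, Complex.I_re, Complex.I_im, hreal x,
    hreal y] at h₁ h₂
  apply Complex.ext <;> simp only [Complex.conj_re, Complex.conj_im] <;> linarith

lemma norm_apply_star_mul_le (hpos : ∀ x : M, 0 ≤ (ψ (star x * x)).re)
    (hreal : ∀ x : M, (ψ (star x * x)).im = 0) (x y : M) :
    ‖ψ (star x * y)‖ ≤ √(ψ (star x * x)).re * √(ψ (star y * y)).re := by
  let _ : PreInnerProductSpace.Core ℂ M :=
    { inner x y := ψ (star x * y)
      conj_inner_symm x y := conj_apply_star_mul ψ hreal y x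
      re_inner_nonneg := hpos
      add_left x y z := by simp only [star_add, add_mul, map_add]
      smul_left x y r := by simp only [star_smul, smul_mul_assoc, map_smul, smul_eq_mul]; rfl }
  have hcs := InnerProductSpace.Core.inner_mul_inner_self_le (𝕜 := ℂ) x y
  change ‖ψ (star x * y)‖ * ‖ψ (star y * x)‖ ≤ _ at hcs
  rw [← conj_apply_star_mul ψ hreal x y, RCLike.norm_conj] at hcs
  rw [← Real.sqrt_mul (hpos x), ← Real.sqrt_mul_self (norm_nonneg _)]
  exact Real.sqrt_le_sqrt hcs

end PositiveFunctional

lemma re_apply_star_mul_self_le {M : Type*} [NormedRing M] [StarRing M] [CStarRing M]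
    [NormedAlgebra ℂ M] (ψ : M →L[ℂ] ℂ) (x : M) :
    (ψ (star x * x)).re ≤ ‖ψ‖ * ‖x‖ ^ 2 :=
  calc (ψ (star x * x)).re ≤ ‖ψ (star x * x)‖ := Complex.re_le_norm _
    _ ≤ ‖ψ‖ * ‖star x * x‖ := ψ.le_opNorm _
    _ = ‖ψ‖ * ‖x‖ ^ 2 := by rw [CStarRing.norm_star_mul_self, sq]

theorem stmt_0_general {M : Type*} [NormedRing M] [StarRing M] [CStarRing M]
    [NormedAlgebra ℂ M] [StarModule ℂ M]
    (lam ψ : M →L[ℂ] ℂ) (v : M)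
    (hpos : ∀ x : M, 0 ≤ (ψ (star x * x)).re)
    (hreal : ∀ x : M, (ψ (star x * x)).im = 0)
    (hpolar : ∀ x : M, lam x = ψ (v * x))
    (hnorm : ‖ψ‖ = ‖lam‖) (a : M) :
    ‖lam.comp (ContinuousLinearMap.mul ℂ M a)‖ ≤
      Real.sqrt ((ψ (v * (a * (star a * star v)))).re) * Real.sqrt ‖lam‖ := by
  refine ContinuousLinearMap.opNorm_le_bound _ (by positivity) fun x => ?_
  have hb : ∀ y, v * (a * y) = star (star (v * a)) * y := by simp [mul_assoc]
  have hvaav : v * (a * (star a * star v)) = star (star (v * a)) * star (v * a) := by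
    simp [mul_assoc]
  calc ‖lam (a * x)‖ = ‖ψ (star (star (v * a)) * x)‖ := by rw [hpolar, hb]
    _ ≤ √(ψ (v * (a * (star a * star v)))).re * √(ψ (star x * x)).re := by
      rw [hvaav]; exact norm_apply_star_mul_le ψ.toLinearMap hpos hreal _ x
    _ ≤ √(ψ (v * (a * (star a * star v)))).re * √(‖lam‖ * ‖x‖ ^ 2) := by
      gcongr; rw [← hnorm]; exact re_apply_star_mul_self_le ψ x
    _ = √(ψ (v * (a * (star a * star v)))).re * √‖lam‖ * ‖x‖ := by
      rw [Real.sqrt_mul (norm_nonneg _), Real.sqrt_sq (norm_nonneg _), mul_assoc]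

/-- Lemma 2.1 (first inequality): if `λ = ψ v` is the polar decomposition of a
σ-weakly continuous functional, then `‖λ a‖ ≤ ψ(v a a* v*)^{1/2} ‖λ‖^{1/2}`. -/
theorem stmt_0 {M : Type*} [NormedRing M] [StarRing M] [CStarRing M]
    [NormedAlgebra ℂ M] [CompleteSpace M] [StarModule ℂ M]
    (lam ψ : M →L[ℂ] ℂ) (v : M)
    (hpos : ∀ x : M, 0 ≤ (ψ (star x * x)).re)
    (hreal : ∀ x : M, (ψ (star x * x)).im = 0)
    (hpolar : ∀ x : M, lam x = ψ (v * x))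
    (hpartial : v * star v * v = v)
    (hnorm : ‖ψ‖ = ‖lam‖) (a : M) :
    ‖lam.comp (ContinuousLinearMap.mul ℂ M a)‖ ≤
      Real.sqrt ((ψ (v * (a * (star a * star v)))).re) * Real.sqrt ‖lam‖ :=
  stmt_0_general lam ψ v hpos hreal hpolar hnorm a
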